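/- arXiv:1105.3104 — 4 statements merged into one kernel-verified Lean document; each statement's English description precedes it below -/
import Mathlib

section
/- Let G be a monoid and k a field. The canonical homomorphism from G to the monoid of monoidal natural endomorphisms of the forgetful functor from the category of G-representations on k-vector spaces to the category of k-vector spaces (sending g to the natural transformation 'act by g') is an isomorphism of monoids. -/
open scoped TensorProduct

universe u

/-- A monoidal natural endomorphism of the forgetful functor from `G`-representations on
`k`-vector spaces to `k`-vector spaces: a family of `k`-linear endomorphisms, one for
each representation, natural with respect to all `G`-equivariant maps, and compatible
with the monoidal (tensor product) structure of the forgetful functor. -/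
structure MonoidalForgetEnd (k G : Type u) [Field k] [Monoid G] where
  app : ∀ (V : Type u) [AddCommGroup V] [Module k V], Representation k G V → (V →ₗ[k] V)
  naturality : ∀ (V W : Type u) [AddCommGroup V] [Module k V] [AddCommGroup W] [Module k W]
    (ρV : Representation k G V) (ρW : Representation k G W) (f : V →ₗ[k] W),
    (∀ g : G, f ∘ₗ ρV g = ρW g ∘ₗ f) → f ∘ₗ app V ρV = app W ρW ∘ₗ f
  tensor : ∀ (V W : Type u) [AddCommGroup V] [Module k V] [AddCommGroup W] [Module k W]
    (ρV : Representation k G V) (ρW : Representation k G W),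
    app (V ⊗[k] W) (ρV.tprod ρW) = TensorProduct.map (app V ρV) (app W ρW)
  unit : app k (Representation.trivial k (G := G) (V := k)) = LinearMap.id

/-- The canonical map `G → End_⊗(Forget)` sending `g` to the natural endomorphism
"act by `g`". -/
noncomputable def actBy (k G : Type u) [Field k] [Monoid G] (g : G) :
    MonoidalForgetEnd k G where
  app V _ _ ρ := ρ g
  naturality := fun _ _ _ _ _ _ _ _ _ h => h g
  tensor := fun _ _ _ _ _ _ ρV ρW => Representation.tprod_apply ρV ρW g
  unit := rfl

/-!
A natural endomorphism `η` of the forgetful functor is determined by `a = η(1)`, its value on the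
unit of the left regular representation `k[G]`: every vector `v` is the image of `1` under the
equivariant map `k[G] → V`, `g ↦ g • v`. The comultiplication `k[G] → k[G] ⊗ k[G]` and the counit
`k[G] → k` are equivariant, so naturality and monoidality of `η` make `a` group-like, and the
group-like elements of `k[G]` are exactly the `single g 1`.
-/

open MonoidAlgebra Representation Coalgebra

section LeftRegular

variable {k G : Type*} [CommSemiring k] [Monoid G]

theorem Representation.comul_comp_leftRegular (g : G) :
    comul ∘ₗ leftRegular k G g = ((leftRegular k G).tprod (leftRegular k G)) g ∘ₗ comul := by
  ext x
  simp [Representation.tprod_apply]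

theorem Representation.counit_comp_leftRegular (g : G) :
    counit ∘ₗ leftRegular k G g = trivial k G k g ∘ₗ counit := by
  ext x
  simp

end LeftRegular

namespace MonoidalForgetEnd

variable {k G : Type u} [Field k] [Monoid G]

theorem ext {η θ : MonoidalForgetEnd k G} (h : η.app = θ.app) : η = θ := by
  cases η; cases θ; cases h; rfl

theorem naturality_apply (η : MonoidalForgetEnd k G) {V W : Type u} [AddCommGroup V] [Module k V]
    [AddCommGroup W] [Module k W] {ρ : Representation k G V} {σ : Representation k G W}
    (f : ρ.IntertwiningMap σ) (v : V) : f (η.app V ρ v) = η.app W σ (f v) :=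
  LinearMap.congr_fun (η.naturality V W ρ σ f.toLinearMap f.isIntertwining') v

noncomputable def atOne (η : MonoidalForgetEnd k G) : k[G] :=
  η.app k[G] (leftRegular k G) (single 1 1)

theorem app_apply_eq_leftRegularMapEquiv_symm (η : MonoidalForgetEnd k G) {V : Type u}
    [AddCommGroup V] [Module k V] (ρ : Representation k G V) (v : V) :
    η.app V ρ v = (leftRegularMapEquiv ρ).symm v η.atOne := by
  rw [atOne, naturality_apply, leftRegularMapEquiv_symm_single, map_one, Module.End.one_apply]

theorem isGroupLikeElem_atOne (η : MonoidalForgetEnd k G) : IsGroupLikeElem k η.atOne where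
  counit_eq_one := by
    have := LinearMap.congr_fun
      (η.naturality _ _ _ _ counit counit_comp_leftRegular) (single 1 1)
    simpa [atOne, η.unit] using this
  comul_eq_tmul_self := by
    have := LinearMap.congr_fun
      (η.naturality _ _ _ _ comul comul_comp_leftRegular) (single 1 1)
    simpa [atOne, η.tensor] using this

theorem atOne_actBy (g : G) : (actBy k G g).atOne = single g 1 := by
  simp [atOne, actBy]

theorem eq_actBy_of_atOne_eq {η : MonoidalForgetEnd k G} {g : G} (h : η.atOne = single g 1) :
    η = actBy k G g := by
  refine ext ?_
  funext V _ _ ρ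
  ext v
  rw [app_apply_eq_leftRegularMapEquiv_symm, h, leftRegularMapEquiv_symm_single]
  rfl

end MonoidalForgetEnd

open MonoidalForgetEnd in
/-- **Tannaka–Krein reconstruction.** Let `G` be a monoid and `k` a field.
The canonical homomorphism from `G` to the monoid (under composition) of monoidal natural
endomorphisms of the forgetful functor `Rep(G, k) → Vect(k)` is an isomorphism of
monoids: it is bijective, preserves the unit, and sends products to composites. -/
theorem stmt_0 (k G : Type u) [Field k] [Monoid G] :
    Function.Bijective (actBy k G) ∧
      (∀ (V : Type u) [AddCommGroup V] [Module k V] (ρ : Representation k G V),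
        (actBy k G 1).app V ρ = LinearMap.id) ∧
      (∀ (g h : G) (V : Type u) [AddCommGroup V] [Module k V] (ρ : Representation k G V),
        (actBy k G (g * h)).app V ρ = (actBy k G g).app V ρ ∘ₗ (actBy k G h).app V ρ) := by
  refine ⟨⟨fun g h hgh => ?_, fun η => ?_⟩, fun V _ _ ρ => ρ.map_one,
    fun g h V _ _ ρ => ρ.map_mul g h⟩
  · apply single_left_injective (one_ne_zero (α := k))
    simpa only [atOne_actBy] using congrArg atOne hgh
  · obtain ⟨g, hg⟩ := isGroupLikeElem_iff_mem_range_single_one.mp (isGroupLikeElem_atOne η)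
    exact ⟨g, (eq_actBy_of_atOne_eq hg.symm).symm⟩
end

section
/- Let S be a set and k a field with |S| ≤ |k| (or both S and k finite). Then every k-algebra homomorphism from the k-algebra of functions S → k to k is evaluation at some point s ∈ S; i.e. the canonical injection S → Hom_{k-Alg}(k^S, k) is a bijection. -/
universe u

/-!
A character `φ : k^S → k` sends `f` to a point of its spectrum, i.e. to one of its values. If
`φ` is nonzero on some indicator `e_s = Pi.single s 1`, then idempotence forces `φ e_s = 1`, and
`e_s * f = f s • e_s` gives `φ = ev_s`. For finite `S` such an `s` exists because `∑ s, e_s = 1`.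
If instead `ι : S → k` is injective, `ι` takes the value `φ ι` at a unique `s₀`, so
`ι - φ ι + e_{s₀}` vanishes nowhere; being a unit, its image `φ e_{s₀}` is nonzero.
-/

open Function

namespace AlgHom

variable {k S : Type*}

theorem eq_evalAlgHom_of_map_single_eq_one [CommSemiring k] [DecidableEq S]
    (φ : (S → k) →ₐ[k] k) {s : S} (hs : φ (Pi.single s 1) = 1) :
    φ = Pi.evalAlgHom k (fun _ : S => k) s := by
  ext f
  have hmul : Pi.single s 1 * f = f s • Pi.single s (1 : k) := by
    rw [← Pi.single_mul_left, one_mul, ← Pi.single_smul, smul_eq_mul, mul_one]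
  simpa [hs] using congrArg φ hmul

theorem map_single_eq_one_of_ne_zero [CommSemiring k] [IsDomain k] [DecidableEq S]
    (φ : (S → k) →ₐ[k] k) {s : S} (hs : φ (Pi.single s (1 : k)) ≠ 0) :
    φ (Pi.single s (1 : k)) = 1 := by
  have hidem : IsIdempotentElem (Pi.single s (1 : k) : S → k) := by
    rw [IsIdempotentElem, ← Pi.single_mul, one_mul]
  exact (IsIdempotentElem.iff_eq_zero_or_one.mp (hidem.map φ)).resolve_left hs

theorem exists_apply_eq [Field k] (φ : (S → k) →ₐ[k] k) (f : S → k) : ∃ s, f s = φ f := by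
  have hmem := apply_mem_spectrum φ f
  rw [Pi.spectrum_eq, Set.mem_iUnion] at hmem
  obtain ⟨s, hs⟩ := hmem
  refine ⟨s, ?_⟩
  rw [spectrum.mem_iff, isUnit_iff_ne_zero, not_not, Algebra.algebraMap_self, RingHom.id_apply,
    sub_eq_zero] at hs
  exact hs.symm

theorem exists_map_single_ne_zero_of_finite [CommSemiring k] [Nontrivial k] [_root_.Finite S]
    [DecidableEq S] (φ : (S → k) →ₐ[k] k) : ∃ s, φ (Pi.single s 1) ≠ 0 := by
  have := Fintype.ofFinite S
  have hsum : ∑ s, φ (Pi.single s 1) = 1 := by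
    have hone : ∑ s, Pi.single s (1 : k) = (1 : S → k) := LinearMap.sum_single_apply (v := 1)
    rw [← map_sum, hone, map_one]
  obtain ⟨s, -, hs⟩ := Finset.exists_ne_zero_of_sum_ne_zero (hsum ▸ one_ne_zero)
  exact ⟨s, hs⟩

theorem exists_map_single_ne_zero_of_injective [Field k] [DecidableEq S]
    (φ : (S → k) →ₐ[k] k) {ι : S → k} (hι : Injective ι) : ∃ s, φ (Pi.single s 1) ≠ 0 := by
  obtain ⟨s₀, hs₀⟩ := φ.exists_apply_eq ι
  refine ⟨s₀, fun hzero => ?_⟩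
  set w : S → k := ι - algebraMap k (S → k) (φ ι) + Pi.single s₀ 1
  have hw : IsUnit w := by
    refine Pi.isUnit_iff.mpr fun s => isUnit_iff_ne_zero.mpr ?_
    by_cases hs : s = s₀
    · subst hs
      simp [w, hs₀]
    · have hne : ι s ≠ φ ι := hs₀ ▸ hι.ne hs
      simpa [w, hs, sub_eq_zero] using hne
  have hφw : φ w = 0 := by simp [w, hzero]
  exact (hw.map φ).ne_zero hφw

end AlgHom

theorem Pi.evalAlgHom_injective (k S : Type*) [CommSemiring k] [Nontrivial k] :
    Injective (fun s : S => Pi.evalAlgHom k (fun _ : S => k) s) := by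
  classical
  intro s t hst
  by_contra hne
  simpa [Pi.single_apply, Ne.symm hne] using DFunLike.congr_fun hst (Pi.single s (1 : k))

/-- Let `S` be a set and `k` a field with `|S| ≤ |k|` (or both finite).
Then the canonical injection `S → Hom_{k-Alg}(k^S, k)`, sending `s` to evaluation at `s`,
is a bijection. -/
theorem stmt_1 (k S : Type u) [Field k]
    (h : Cardinal.mk S ≤ Cardinal.mk k ∨ (Finite S ∧ Finite k)) :
    Function.Bijective (fun s : S => Pi.evalAlgHom k (fun _ : S => k) s) := by
  classical
  refine ⟨Pi.evalAlgHom_injective k S, fun φ => ?_⟩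
  obtain ⟨s, hs⟩ : ∃ s, φ (Pi.single s 1) ≠ 0 := by
    rcases h with hcard | ⟨hS, -⟩
    · obtain ⟨ι⟩ := Cardinal.le_def S k |>.mp hcard
      exact φ.exists_map_single_ne_zero_of_injective ι.injective
    · exact φ.exists_map_single_ne_zero_of_finite
  exact ⟨s, (φ.eq_evalAlgHom_of_map_single_eq_one (φ.map_single_eq_one_of_ne_zero hs)).symm⟩
end

section
/- Let C be a locally presentable category and D a locally small category. A functor F : C → D is a left adjoint if and only if it preserves all small colimits. -/
open CategoryTheory CategoryTheory.Limits

universe v u u₂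

/-- A category `J` is `κ`-filtered if every diagram in `J` with fewer than `κ` arrows
admits a cocone. -/
def IsCardinalFiltered (J : Type v) [Category.{v} J] (κ : Cardinal.{v}) : Prop :=
  ∀ (K : Type v) (_ : SmallCategory K),
    Cardinal.mk (Σ (a : K) (b : K), a ⟶ b) < κ →
      ∀ F : K ⥤ J, Nonempty (Limits.Cocone F)

/-- An object `x` of a category `C` is `κ`-presentable (`κ`-compact, "κ-little") if
`Hom(x, -)` preserves colimits of `κ`-filtered diagrams. -/
def IsCardinalPresentable {C : Type u} [Category.{v} C] (x : C) (κ : Cardinal.{v}) : Prop :=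
  ∀ (J : Type v) (_ : SmallCategory J), IsCardinalFiltered J κ →
    Nonempty (PreservesColimitsOfShape J (coyoneda.obj (Opposite.op x)))

/-- A category is *locally presentable* if it is locally small (automatic here),
cocomplete, and there is a set of presentable objects generating it under colimits. -/
def IsLocallyPresentable (C : Type u) [Category.{v} C] : Prop :=
  HasColimitsOfSize.{v, v} C ∧
    ∃ (ι : Type v) (G : ι → C),
      (∀ i, ∃ κ : Cardinal.{v}, κ.IsRegular ∧ IsCardinalPresentable (G i) κ) ∧
      ∀ X : C, ∃ (J : Type v) (_ : SmallCategory J) (F : J ⥤ C) (c : Limits.Cocone F),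
        (∀ j : J, ∃ i : ι, Nonempty (F.obj j ≅ G i)) ∧
        Nonempty (Limits.IsColimit c) ∧ Nonempty (c.pt ≅ X)

universe v₂ w w'

/-!
For `X : D`, the category `CostructuredArrow F X` is cocomplete because `F` preserves colimits.
If every object of `C` is a small colimit of objects satisfying a small property `P`, then every
`(A, F A ⟶ X)` is a small colimit of arrows `F B ⟶ X` with `P B`. These arrows form an
essentially small full subcategory, whose colimit `W` receives a map from every object. A cocomplete
category with such a weakly terminal object `W` has a terminal object (coequalize all endomorphisms
of `W`), and terminal objects of all `CostructuredArrow F X` assemble into a right adjoint.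
-/

namespace CategoryTheory

theorem hasTerminal_of_weakly_terminal {E : Type u} [Category.{v} E] [HasColimitsOfSize.{v, v} E]
    {T : E} (hT : ∀ X : E, Nonempty (X ⟶ T)) : HasTerminal E :=
  have : HasInitial Eᵒᵖ :=
    hasInitial_of_weakly_initial_and_hasWideEqualizers (T := Opposite.op T)
      fun X => (hT X.unop).map Quiver.Hom.op
  hasTerminal_of_hasInitial_op

namespace ObjectProperty

variable {C : Type u} [Category.{v} C] (P : ObjectProperty C)

lemma colimitsOfShape_of_isColimit {J : Type w} [Category.{w'} J] {K : J ⥤ C} {c : Cocone K}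
    (hc : IsColimit c) (hK : ∀ j, P.isoClosure (K.obj j)) {X : C} (e : c.pt ≅ X) :
    P.colimitsOfShape J X := by
  rw [← colimitsOfShape_isoClosure]
  exact ⟨ColimitOfShape.ofIso ⟨⟨K, c.ι, hc⟩, hK⟩ e⟩

lemma nonempty_hom_colimit_ι [HasColimit P.ι] {J : Type w} [Category.{w'} J] {X : C}
    (hX : P.colimitsOfShape J X) : Nonempty (X ⟶ colimit P.ι) :=
  let ⟨p⟩ := hX
  ⟨p.isColimit.desc ((colimit.cocone P.ι).whisker (P.lift p.diag p.prop_diag_obj))⟩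

end ObjectProperty

namespace CostructuredArrow

variable {C : Type u} [Category.{v} C] {D : Type u₂} [Category.{v₂} D]

lemma colimitsOfShape_inverseImage_proj {F : C ⥤ D} {X : D} {P : ObjectProperty C}
    {J : Type w} [Category.{w'} J] [PreservesColimitsOfShape J F] {Z : CostructuredArrow F X}
    (hZ : P.colimitsOfShape J Z.left) : (P.inverseImage (proj F X)).colimitsOfShape J Z := by
  obtain ⟨p⟩ := hZ
  let diag : J ⥤ CostructuredArrow F X :=
    p.diag.toCostructuredArrow F X (fun j => F.map (p.ι.app j) ≫ Z.hom) fun f => by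
      rw [← F.map_comp_assoc, p.ι.naturality f]
      simp
  let c : Cocone diag :=
    { pt := Z
      ι :=
        { app := fun j => homMk (p.ι.app j)
          naturality := fun _ _ f => by ext; exact p.ι.naturality f } }
  exact ⟨⟨⟨diag, c.ι, isColimitOfReflects (proj F X) p.isColimit⟩, p.prop_diag_obj⟩⟩

end CostructuredArrow

theorem isLeftAdjoint_of_preservesColimits_of_colimitsOfShape
    {C : Type u} [Category.{v} C] {D : Type u₂} [Category.{v} D] [HasColimitsOfSize.{v, v} C]
    (F : C ⥤ D) [PreservesColimitsOfSize.{v, v} F] (P : ObjectProperty C)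
    [ObjectProperty.Small.{v} P]
    (hP : ∀ X : C, ∃ (J : Type v) (_ : SmallCategory J), P.colimitsOfShape J X) :
    F.IsLeftAdjoint := by
  have (Y : D) : HasTerminal (CostructuredArrow F Y) := by
    let Q := P.inverseImage (CostructuredArrow.proj F Y)
    have : HasColimitsOfShape Q.FullSubcategory (CostructuredArrow F Y) :=
      hasColimitsOfShape_of_essentiallySmall.{v} _ _
    refine hasTerminal_of_weakly_terminal (T := colimit Q.ι) fun Z => ?_
    obtain ⟨J, _, hZ⟩ := hP Z.left
    exact Q.nonempty_hom_colimit_ι (CostructuredArrow.colimitsOfShape_inverseImage_proj hZ)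
  exact isLeftAdjoint_of_costructuredArrowTerminals F

end CategoryTheory

/-- Let `C` be a locally presentable category and `D` a locally small
category.  A functor `F : C ⥤ D` is a left adjoint if and only if it preserves all small
colimits. -/
theorem stmt_4 (C : Type u) [Category.{v} C] (hC : _root_.IsLocallyPresentable C)
    (D : Type u₂) [Category.{v} D] (F : C ⥤ D) :
    F.IsLeftAdjoint ↔ Nonempty (PreservesColimitsOfSize.{v, v} F) := by
  refine ⟨fun _ => ⟨(Adjunction.ofIsLeftAdjoint F).leftAdjoint_preservesColimits⟩, ?_⟩
  rintro ⟨_⟩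
  obtain ⟨_, ι, G, -, hgen⟩ := hC
  refine isLeftAdjoint_of_preservesColimits_of_colimitsOfShape F (.ofObj G) fun X => ?_
  obtain ⟨J, _, K, c, hK, ⟨hc⟩, ⟨e⟩⟩ := hgen X
  refine ⟨J, _, ObjectProperty.colimitsOfShape_of_isColimit _ hc (fun j => ?_) e⟩
  obtain ⟨i, ⟨e'⟩⟩ := hK j
  exact ⟨G i, ⟨i⟩, ⟨e'⟩⟩
end

section
/- Let M be the 'walking idempotent' monoid (one object, one non-identity endomorphism m with m² = m) and P the 'walking projection' category (two objects •, ∘ with morphisms p : • → ∘ and i : ∘ → • satisfying p ∘ i = id_∘). Then there is no small category X such that the functor category Fun(X, M) is equivalent to P. -/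
open CategoryTheory

universe u

/-- The "walking idempotent" monoid `{1, m}` with `m * m = m`. -/
inductive WI : Type
  | one : WI
  | m : WI

instance : Monoid WI where
  one := .one
  mul a b := match a with | .one => b | .m => .m
  one_mul _ := rfl
  mul_one a := by cases a <;> rfl
  mul_assoc a b c := by cases a <;> rfl

/-!
The walking idempotent is the two-element monoid with zero `{1, m}`, `m` playing the role
of `0`, and the argument works for every nontrivial monoid with zero `M`. Equivalences
preserve endomorphism sets up to bijection. If `X` is nonempty, every functor `X ⥤ M` has
the endomorphism with all components `0`, distinct from the identity, whereas the object
`(⋆, 0)` of the Karoubi envelope has a single endomorphism. If `X` is empty, all hom-sets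
of `X ⥤ M` are subsingletons, whereas the object `(⋆, 1)` has endomorphism monoid `M`.
-/

open Idempotents

instance {X C : Type*} [Category X] [Category C] [IsEmpty X] (F G : X ⥤ C) :
    Subsingleton (F ⟶ G) :=
  ⟨fun _ _ => NatTrans.ext (funext isEmptyElim)⟩

namespace CategoryTheory.SingleObj

variable {M : Type*} [MonoidWithZero M]

def zeroNatTrans {X : Type*} [Category X] (F : X ⥤ SingleObj M) : F ⟶ F where
  app _ := (0 : M)
  naturality _ _ f := by
    change (0 : M) * F.map f = F.map f * 0
    rw [zero_mul, mul_zero]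

instance [Nontrivial M] {X : Type*} [Category X] [Nonempty X] (F : X ⥤ SingleObj M) :
    Nontrivial (F ⟶ F) :=
  ⟨⟨zeroNatTrans F, 𝟙 F,
    fun h => zero_ne_one (congrArg (NatTrans.app · (Classical.arbitrary X)) h)⟩⟩

def karoubiZero : Karoubi (SingleObj M) :=
  ⟨star M, (0 : M), mul_zero (0 : M)⟩

instance : Subsingleton (karoubiZero (M := M) ⟶ karoubiZero) :=
  ⟨fun f g => Karoubi.Hom.ext <| by
    rw [← f.comm, ← g.comm]
    change _ * (0 : M) = _ * (0 : M)
    rw [mul_zero, mul_zero]⟩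

instance [Nontrivial M] :
    Nontrivial ((toKaroubi (SingleObj M)).obj (star M) ⟶ (toKaroubi _).obj (star M)) :=
  (fullyFaithfulToKaroubi _).homEquiv.symm.nontrivial (β := M)

theorem isEmpty_functor_equivalence_karoubi [Nontrivial M] (X : Type*) [Category X] :
    IsEmpty ((X ⥤ SingleObj M) ≌ Karoubi (SingleObj M)) := by
  refine ⟨fun E => ?_⟩
  rcases isEmpty_or_nonempty X with hX | hX
  · let A := (toKaroubi (SingleObj M)).obj (star M)
    have endEquiv := E.fullyFaithfulInverse.homEquiv (X := A) (Y := A)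
    exact not_subsingleton _ endEquiv.subsingleton
  · let A : Karoubi (SingleObj M) := karoubiZero
    have endEquiv := E.fullyFaithfulInverse.homEquiv (X := A) (Y := A)
    exact not_subsingleton _ endEquiv.symm.subsingleton

end CategoryTheory.SingleObj

instance : MonoidWithZero WI where
  zero := .m
  zero_mul _ := rfl
  mul_zero a := by cases a <;> rfl

instance : Nontrivial WI := ⟨⟨.one, .m, WI.noConfusion⟩⟩

/-- Let `M` be the walking idempotent (the one-object category with a
single nonidentity endomorphism `m` satisfying `m² = m`) and `P` the walking projection
(its idempotent splitting, i.e. Karoubi envelope).  Then there is no small category `X`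
with `Fun(X, M)` equivalent to `P`. -/
theorem stmt_19 (X : Type u) [SmallCategory X] :
    IsEmpty ((X ⥤ SingleObj WI) ≌ Idempotents.Karoubi (SingleObj WI)) :=
  SingleObj.isEmpty_functor_equivalence_karoubi X
end
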